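/- arXiv:1702.07610 — 7 statements merged into one kernel-verified Lean document; each statement's English description precedes it below -/
import Mathlib

section
/- For every integer r ≥ 0 and every real x ≥ 0, h_r(x) ≤ exp(2√(rx)), where h_r(x) = Σ_{k=0}^{r} (1/k!)·C(r-1, k-1)·x^k (with h_0 = 1). -/
/-!
With `s = √(r x)`, the bounds `C(r-1, k-1) ≤ C(r, k) ≤ r^k / k!` make the `k`-th term of `h_r(x)`
at most `(s^k / k!)^2`. A sum of squares of nonnegative numbers is at most the square of their
sum, and the partial sums of the exponential series at `s ≥ 0` are at most `exp s`, so
`h_r(x) ≤ (exp s)^2 = exp(2 s)`.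
-/

open Finset Nat

theorem Nat.choose_pred_le_choose {n k : ℕ} (hn : 0 < n) (hk : 0 < k) :
    (n - 1).choose (k - 1) ≤ n.choose k := by
  rw [choose_eq_choose_pred_add hn hk]
  exact Nat.le_add_right _ _

theorem Real.sum_sq_pow_div_factorial_le_exp_two_mul {s : ℝ} (hs : 0 ≤ s) (n : ℕ) :
    ∑ k ∈ range n, (s ^ k / k !) ^ 2 ≤ Real.exp (2 * s) :=
  calc ∑ k ∈ range n, (s ^ k / k !) ^ 2
      ≤ (∑ k ∈ range n, s ^ k / k !) ^ 2 :=
        sum_sq_le_sq_sum_of_nonneg fun _ _ => by positivity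
    _ ≤ Real.exp s ^ 2 := by
        gcongr
        exact Real.sum_le_exp_of_nonneg hs n
    _ = Real.exp (2 * s) := by rw [← Real.exp_nat_mul]; norm_num

theorem one_div_factorial_mul_choose_pred_mul_pow_le {r k : ℕ} (hr : 0 < r) (hk : 0 < k)
    {x : ℝ} (hx : 0 ≤ x) :
    1 / (k ! : ℝ) * ((r - 1).choose (k - 1) : ℝ) * x ^ k ≤ (Real.sqrt (r * x) ^ k / k !) ^ 2 := by
  have hchoose : ((r - 1).choose (k - 1) : ℝ) ≤ (r : ℝ) ^ k / k ! :=
    (Nat.cast_le.mpr (choose_pred_le_choose hr hk)).trans (choose_le_pow_div k r)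
  calc 1 / (k ! : ℝ) * ((r - 1).choose (k - 1) : ℝ) * x ^ k
      ≤ 1 / (k ! : ℝ) * ((r : ℝ) ^ k / k !) * x ^ k := by gcongr
    _ = (Real.sqrt (r * x) ^ k / k !) ^ 2 := by
        rw [div_pow, ← pow_mul, mul_comm k 2, pow_mul, Real.sq_sqrt (by positivity), mul_pow]
        field_simp

/-- `h_r(x) ≤ exp(2√(rx))` for `x ≥ 0`, where
`h_r(x) = Σ_{k=1}^r (1/k!) C(r-1,k-1) x^k` (and `h_0 = 1`). -/
theorem h_exp_bound (r : ℕ) (x : ℝ) (hx : 0 ≤ x) :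
    (if r = 0 then (1 : ℝ)
      else ∑ k ∈ Finset.Icc 1 r,
        (1 / (k.factorial : ℝ)) * ((r - 1).choose (k - 1) : ℝ) * x ^ k)
      ≤ Real.exp (2 * Real.sqrt (r * x)) := by
  split_ifs with hr
  · exact Real.one_le_exp (by positivity)
  calc ∑ k ∈ Icc 1 r, 1 / (k ! : ℝ) * ((r - 1).choose (k - 1) : ℝ) * x ^ k
      ≤ ∑ k ∈ Icc 1 r, (Real.sqrt (r * x) ^ k / k !) ^ 2 :=
        sum_le_sum fun k hk => one_div_factorial_mul_choose_pred_mul_pow_le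
          (Nat.pos_of_ne_zero hr) (mem_Icc.mp hk).1 hx
    _ ≤ ∑ k ∈ range (r + 1), (Real.sqrt (r * x) ^ k / k !) ^ 2 := by
        refine sum_le_sum_of_subset_of_nonneg (fun k hk => ?_) fun _ _ _ => by positivity
        simp only [mem_Icc, mem_range] at hk ⊢
        omega
    _ ≤ Real.exp (2 * Real.sqrt (r * x)) :=
        Real.sum_sq_pow_div_factorial_le_exp_two_mul (Real.sqrt_nonneg _) (r + 1)
end

section
/- For every real x ≥ 0 and integer r ≥ 0, H_r(x) ≤ h_r(x), where H_r(x) = x(x+1)···(x+r-1)/r! and h_r(x) = Σ_{k=1}^{r} (1/k!)·C(r-1,k-1)·x^k (both equal to 1 at r = 0). -/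
open Finset

private lemma choose_mul_le' (n j : ℕ) : (j+2) * n.choose j ≤ (n+2) * n.choose j := by
  rcases le_or_gt j n with h | h
  · exact Nat.mul_le_mul_right _ (by omega)
  · simp [Nat.choose_eq_zero_of_lt h]

noncomputable def Sp (r : ℕ) (x : ℝ) : ℝ :=
  ∑ k ∈ range r, (1 / ((k+1).factorial : ℝ)) * ((r - 1).choose k : ℝ) * x ^ (k+1)

lemma Sp_ext {r m : ℕ} (hr : 1 ≤ r) (h : r ≤ m) (x : ℝ) :
    Sp r x = ∑ k ∈ range m, (1 / ((k+1).factorial : ℝ)) * ((r - 1).choose k : ℝ) * x ^ (k+1) := by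
  rw [Sp]
  apply Finset.sum_subset (range_subset_range.2 h)
  intro k _ hk'
  simp only [mem_range, not_lt] at hk'
  have : (r-1).choose k = 0 := Nat.choose_eq_zero_of_lt (by omega)
  simp [this]

lemma coeff_ineq (n j : ℕ) :
    (n.choose j : ℝ) / ((j+1).factorial : ℝ)
      + ((n:ℝ)+1) * ((n.choose (j+1) : ℝ) / ((j+2).factorial : ℝ))
      ≤ ((n:ℝ)+2) * (((n+1).choose (j+1) : ℝ) / ((j+2).factorial : ℝ)) := by
  have h2 : ((j+2).factorial : ℝ) = ((j:ℝ)+2) * ((j+1).factorial : ℝ) := by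
    rw [show j+2 = (j+1)+1 from rfl, Nat.factorial_succ]; push_cast; ring
  have hf1 : (0:ℝ) < ((j+1).factorial : ℝ) := by exact_mod_cast (j+1).factorial_pos
  have hf2 : (0:ℝ) < ((j+2).factorial : ℝ) := by exact_mod_cast (j+2).factorial_pos
  have e1 : (n.choose j : ℝ) / ((j+1).factorial : ℝ)
      = (((j:ℝ)+2) * (n.choose j : ℝ)) / ((j+2).factorial : ℝ) := by
    rw [h2, mul_div_mul_left _ _ (by positivity)]
  rw [Nat.choose_succ_succ, e1, mul_div_assoc', mul_div_assoc', ← add_div,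
    div_le_div_iff₀ hf2 hf2]
  have hnat : ((j:ℝ)+2) * (n.choose j : ℝ) ≤ ((n:ℝ)+2) * (n.choose j : ℝ) := by
    exact_mod_cast choose_mul_le' n j
  have hb : (0:ℝ) ≤ (n.choose (j+1) : ℝ) := by positivity
  push_cast
  nlinarith [hf2]

lemma key_step (r : ℕ) (hr : 1 ≤ r) (x : ℝ) (hx : 0 ≤ x) :
    (x + r) * Sp r x ≤ ((r:ℝ)+1) * Sp (r+1) x := by
  obtain ⟨n, rfl⟩ : ∃ n, r = n + 1 := ⟨r - 1, by omega⟩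
  set c : ℕ → ℝ := fun k => (1 / ((k+1).factorial : ℝ)) * ((n).choose k : ℝ) with hc
  have hS : Sp (n+1) x = ∑ k ∈ range (n+2), c k * x ^ (k+1) := by
    rw [Sp_ext (r := n+1) (m := n+2) (by omega) (by omega) x]
    simp [hc]
  have hS1 : Sp (n+1+1) x
      = ∑ k ∈ range (n+2), (1 / ((k+1).factorial : ℝ)) * ((n+1).choose k : ℝ) * x ^ (k+1) := by
    rw [Sp]; norm_num
  have hxS : x * Sp (n+1) x
      = ∑ k ∈ range (n+2+1), (if k = 0 then 0 else c (k-1) * x ^ (k+1)) := by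
    rw [Finset.sum_range_succ']
    simp only [Nat.add_sub_cancel, Nat.succ_ne_zero, if_false, reduceIte, add_zero]
    rw [hS, Finset.mul_sum]
    exact Finset.sum_congr rfl fun k _ => by ring
  have hrS : ((n:ℝ)+1) * Sp (n+1) x = ∑ k ∈ range (n+2+1), ((n:ℝ)+1) * (c k * x ^ (k+1)) := by
    rw [show (n+2+1) = (n+2)+1 from rfl, Finset.sum_range_succ, hS, Finset.mul_sum]
    have hz : c (n+2) = 0 := by simp [hc, Nat.choose_eq_zero_of_lt]
    rw [hz]
    ring
  have hRHS : ((n:ℝ)+1+1) * Sp (n+1+1) x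
      = ∑ k ∈ range (n+2+1), ((n:ℝ)+2) * ((1 / ((k+1).factorial : ℝ)) * ((n+1).choose k : ℝ) * x ^ (k+1)) := by
    have hz : (n+1).choose (n+2) = 0 := Nat.choose_eq_zero_of_lt (by omega)
    rw [show (n+2+1) = (n+2)+1 from rfl, Finset.sum_range_succ, hz]
    simp only [Nat.cast_zero, mul_zero, zero_mul, add_zero]
    rw [hS1, Finset.mul_sum]
    exact Finset.sum_congr rfl fun k _ => by ring
  have expand : (x + ((n:ℝ)+1)) * Sp (n+1) x = x * Sp (n+1) x + ((n:ℝ)+1) * Sp (n+1) x := by ring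
  push_cast
  rw [expand, hxS, hrS, hRHS, ← Finset.sum_add_distrib]
  apply Finset.sum_le_sum
  intro k _
  cases k with
  | zero =>
      simp only [reduceIte, zero_add, hc]
      simp only [Nat.choose_zero_right, Nat.choose_self]
      norm_num
      nlinarith [hx]
  | succ j =>
      simp only [Nat.succ_ne_zero, if_false, reduceIte, Nat.add_sub_cancel]
      have hxp : (0:ℝ) ≤ x ^ (j+1+1) := by positivity
      have hcoef : c j + ((n:ℝ)+1) * c (j+1)
          ≤ ((n:ℝ)+2) * ((1 / ((j+1+1).factorial : ℝ)) * ((n+1).choose (j+1) : ℝ)) := by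
        have hci := coeff_ineq n j
        simp only [hc]
        rw [show j+1+1 = j+2 from rfl]
        calc (1 / ((j+1).factorial : ℝ)) * (n.choose j : ℝ)
              + ((n:ℝ)+1) * ((1 / ((j+2).factorial : ℝ)) * (n.choose (j+1) : ℝ))
            = (n.choose j : ℝ) / ((j+1).factorial : ℝ)
              + ((n:ℝ)+1) * ((n.choose (j+1) : ℝ) / ((j+2).factorial : ℝ)) := by ring
          _ ≤ ((n:ℝ)+2) * (((n+1).choose (j+1) : ℝ) / ((j+2).factorial : ℝ)) := hci
          _ = ((n:ℝ)+2) * ((1 / ((j+2).factorial : ℝ)) * (((n+1).choose (j+1) : ℝ))) := by ring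
      calc c j * x ^ (j+1+1) + ((n:ℝ)+1) * (c (j+1) * x ^ (j+1+1))
          = (c j + ((n:ℝ)+1) * c (j+1)) * x ^ (j+1+1) := by ring
        _ ≤ (((n:ℝ)+2) * ((1 / ((j+1+1).factorial : ℝ)) * ((n+1).choose (j+1) : ℝ))) * x ^ (j+1+1) :=
            mul_le_mul_of_nonneg_right hcoef hxp
        _ = ((n:ℝ)+2) * ((1 / ((j+1+1).factorial : ℝ)) * ((n+1).choose (j+1) : ℝ) * x ^ (j+1+1)) := by ring

lemma Icc_eq_Sp (r : ℕ) (x : ℝ) :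
    (∑ k ∈ Finset.Icc 1 r, (1 / (k.factorial : ℝ)) * ((r - 1).choose (k - 1) : ℝ) * x ^ k)
      = Sp r x := by
  rw [show Finset.Icc 1 r = Finset.Ico 1 (r+1) from by rw [Finset.Ico_add_one_right_eq_Icc],
    Finset.sum_Ico_eq_sum_range, Sp]
  simp only [Nat.add_sub_cancel]
  exact Finset.sum_congr rfl fun i _ => by rw [add_comm 1 i]; simp

/-- `H_r(x) ≤ h_r(x)` for `x ≥ 0`, where `H_r(x) = x(x+1)⋯(x+r-1)/r!` and
`h_r(x) = Σ_{k=1}^r (1/k!) C(r-1,k-1) x^k` (both equal to 1 at `r = 0`). -/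
theorem H_le_h (r : ℕ) (x : ℝ) (hx : 0 ≤ x) :
    (∏ i ∈ Finset.range r, (x + i)) / (r.factorial : ℝ)
      ≤ (if r = 0 then (1 : ℝ)
          else ∑ k ∈ Finset.Icc 1 r,
            (1 / (k.factorial : ℝ)) * ((r - 1).choose (k - 1) : ℝ) * x ^ k) := by
  induction r with
  | zero => simp
  | succ r ih =>
      rw [if_neg (Nat.succ_ne_zero r), Icc_eq_Sp]
      rcases Nat.eq_zero_or_pos r with rfl | hr
      · simp [Sp, Nat.factorial]
      · rw [if_neg (by omega), Icc_eq_Sp] at ih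
        have hprod : (0:ℝ) ≤ ∏ i ∈ Finset.range r, (x + i) :=
          Finset.prod_nonneg fun i _ => by positivity
        have hfac : ((r+1).factorial : ℝ) = ((r:ℝ)+1) * (r.factorial : ℝ) := by
          rw [Nat.factorial_succ]; push_cast; ring
        have hfp : (0:ℝ) < (r.factorial : ℝ) := by exact_mod_cast r.factorial_pos
        have h1 : (∏ i ∈ Finset.range (r+1), (x + i)) / ((r+1).factorial : ℝ)
            = ((x + r) * ((∏ i ∈ Finset.range r, (x + i)) / (r.factorial : ℝ))) / ((r:ℝ)+1) := by
          rw [Finset.prod_range_succ, hfac]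
          field_simp
        rw [h1]
        have h2 : (x + r) * ((∏ i ∈ Finset.range r, (x + i)) / (r.factorial : ℝ))
            ≤ (x + r) * Sp r x := by
          apply mul_le_mul_of_nonneg_left ih (by positivity)
        have h3 := key_step r hr x hx
        have h4 : ((x + r) * ((∏ i ∈ Finset.range r, (x + i)) / (r.factorial : ℝ))) / ((r:ℝ)+1)
            ≤ (((r:ℝ)+1) * Sp (r+1) x) / ((r:ℝ)+1) := by
          apply div_le_div_of_nonneg_right ?_ (by positivity)
          exact le_trans h2 h3
        calc _ ≤ (((r:ℝ)+1) * Sp (r+1) x) / ((r:ℝ)+1) := h4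
          _ = Sp (r+1) x := by field_simp
end

section
/- Let ω(n) denote the number of distinct prime divisors of n. There exists an absolute constant C such that for all integers n ≥ 2, ω(n) ≤ C · log n / (2 + log log n). -/
/-!
Split the prime factors of `n` at a threshold `y`: there are at most `y + 1` primes below it,
and the `k` prime factors above it satisfy `y ^ k ≤ n`, so `k ≤ log n / log y`. With `L = log n`
the choice `y = e √L` gives `log y = (2 + log L) / 2`, while the small primes contribute
`O(√L) = O(L / (2 + log L))` because `2 + log L ≤ 2 √L`.
-/

open Finset Real

namespace Nat

theorem card_primeFactors_filter_lt_le (n B : ℕ) : #{p ∈ n.primeFactors | p < B} ≤ B := by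
  simpa using card_le_card (s := {p ∈ n.primeFactors | p < B}) (t := range B)
    fun p hp => mem_range.mpr (mem_filter.mp hp).2

theorem pow_card_primeFactors_filter_le {n : ℕ} (hn : n ≠ 0) (B : ℕ) :
    B ^ #{p ∈ n.primeFactors | ¬p < B} ≤ n :=
  calc B ^ #{p ∈ n.primeFactors | ¬p < B}
      ≤ ∏ p ∈ n.primeFactors with ¬p < B, p :=
        pow_card_le_prod _ _ _ fun _ hp => not_lt.mp (mem_filter.mp hp).2
    _ ≤ n := le_of_dvd (pos_of_ne_zero hn) <|
        (prod_dvd_prod_of_subset _ _ _ (filter_subset _ _)).trans (prod_primeFactors_dvd n)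

end Nat

theorem card_primeFactors_le_add_log_div_log {n : ℕ} (hn : n ≠ 0) {y : ℝ} (hy : 1 < y) :
    (n.primeFactors.card : ℝ) ≤ y + 1 + log n / log y := by
  set B := ⌈y⌉₊
  have hB : (B : ℝ) < y + 1 := Nat.ceil_lt_add_one (by linarith)
  have hlogy : 0 < log y := log_pos hy
  have hsmall : (#{p ∈ n.primeFactors | p < B} : ℝ) ≤ B := by
    exact_mod_cast Nat.card_primeFactors_filter_lt_le n B
  have hlarge : (#{p ∈ n.primeFactors | ¬p < B} : ℝ) * log y ≤ log n :=
    calc (#{p ∈ n.primeFactors | ¬p < B} : ℝ) * log y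
        ≤ #{p ∈ n.primeFactors | ¬p < B} * log B := by
          gcongr; exact Nat.le_ceil y
      _ = log ((B ^ #{p ∈ n.primeFactors | ¬p < B} : ℕ) : ℝ) := by
          rw [Nat.cast_pow, Real.log_pow]
      _ ≤ log n := by
          gcongr
          exact_mod_cast Nat.pow_card_primeFactors_filter_le hn B
  rw [← card_filter_add_card_filter_not (· < B), Nat.cast_add]
  have := (le_div_iff₀ hlogy).mpr hlarge
  linarith

theorem Real.two_add_log_le_two_mul_sqrt {L : ℝ} (hL : 0 < L) : 2 + log L ≤ 2 * √L := by
  have := log_le_sub_one_of_pos (sqrt_pos.mpr hL)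
  rw [log_sqrt hL.le] at this
  linarith

/-- There is an absolute constant `C` with `ω(n) ≤ C log n / (2 + log log n)` for `n ≥ 2`. -/
theorem omega_bound :
    ∃ C : ℝ, 0 < C ∧ ∀ n : ℕ, 2 ≤ n →
      (n.primeFactors.card : ℝ) ≤ C * Real.log n / (2 + Real.log (Real.log n)) := by
  refine ⟨12, by norm_num, fun n hn => ?_⟩
  set L := log n
  have hL : 1 / 2 ≤ L := by
    have : log 2 ≤ L := log_le_log (by norm_num) (by exact_mod_cast hn)
    linarith [log_two_gt_d9]
  have hsqrt : 1 / 2 ≤ √L := le_sqrt_of_sq_le (by linarith)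
  have hsqrt_sq : √L ^ 2 = L := sq_sqrt (by linarith)
  have hD : 0 < 2 + log L := by
    have : log (1 / 2) ≤ log L := log_le_log (by norm_num) hL
    rw [one_div, log_inv] at this
    linarith [log_two_lt_d9]
  have hlogy : log (exp 1 * √L) = (2 + log L) / 2 := by
    rw [log_mul (exp_pos 1).ne' (by positivity), log_exp, log_sqrt (by linarith)]
    ring
  have hy : 1 < exp 1 * √L := (log_pos_iff (by positivity)).mp (by linarith)
  have hω := card_primeFactors_le_add_log_div_log (by omega : n ≠ 0) hy
  rw [hlogy, div_div_eq_mul_div] at hω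
  have hsmall : exp 1 * √L + 1 ≤ 5 * √L := by nlinarith [exp_one_lt_d9]
  rw [le_div_iff₀ hD]
  calc (n.primeFactors.card : ℝ) * (2 + log L)
      ≤ (exp 1 * √L + 1 + L * 2 / (2 + log L)) * (2 + log L) := by gcongr
    _ = (exp 1 * √L + 1) * (2 + log L) + 2 * L := by field_simp
    _ ≤ 5 * √L * (2 * √L) + 2 * L := by
        gcongr
        exact two_add_log_le_two_mul_sqrt (by linarith)
    _ = 12 * L := by linear_combination 10 * hsqrt_sq
end

section
/- For every ε > 0 and R > 0 there exists a constant C = C(ε, R) such that for all integers n ≥ 1 and all complex z with |z| ≤ R, the product Π_{p|n} 2·exp(2√(2 v_p(n) |z| log p)) is at most C · n^ε. -/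
open Finset

/-- For every `ε > 0` and `R > 0` there is `C` such that for all `n ≥ 1` and `|z| ≤ R`,
`Π_{p|n} 2 exp(2√(2 v_p(n) |z| log p)) ≤ C n^ε`. -/
theorem product_bound (ε R : ℝ) (hε : 0 < ε) (hR : 0 < R) :
    ∃ C : ℝ, 0 < C ∧ ∀ n : ℕ, 1 ≤ n → ∀ z : ℂ, ‖z‖ ≤ R →
      (∏ p ∈ n.primeFactors,
        2 * Real.exp (2 * Real.sqrt (2 * (n.factorization p : ℝ) * ‖z‖ * Real.log p)))
        ≤ C * (n : ℝ) ^ ε := by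
  set A : ℝ := 2 * Real.exp (4 * R / ε) with hA
  have hA1 : 1 ≤ A := by
    have h := Real.one_le_exp (le_of_lt (by positivity : (0:ℝ) < 4 * R / ε))
    nlinarith
  have hA0 : 0 < A := lt_of_lt_of_le one_pos hA1
  set B : ℕ := ⌈A ^ (2 / ε)⌉₊ with hB
  refine ⟨A ^ B, by positivity, ?_⟩
  intro n hn z hz
  have hn0 : (0:ℝ) < n := by exact_mod_cast hn
  have hzn : 0 ≤ ‖z‖ := norm_nonneg z
  -- pointwise bound
  have key : ∀ p ∈ n.primeFactors,
      2 * Real.exp (2 * Real.sqrt (2 * (n.factorization p : ℝ) * ‖z‖ * Real.log p))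
        ≤ A * (p : ℝ) ^ (((n.factorization p : ℝ)) * (ε / 2)) := by
    intro p hp
    have hpp : p.Prime := Nat.prime_of_mem_primeFactors hp
    have hp1 : (1:ℝ) ≤ p := by exact_mod_cast hpp.one_lt.le
    have hp0 : (0:ℝ) < p := lt_of_lt_of_le one_pos hp1
    have hlogp : 0 ≤ Real.log p := Real.log_nonneg hp1
    set v : ℝ := (n.factorization p : ℝ) with hv
    have hv0 : 0 ≤ v := Nat.cast_nonneg _
    set u : ℝ := v * Real.log p with hu
    have hu0 : 0 ≤ u := mul_nonneg hv0 hlogp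
    have h1 : Real.sqrt (2 * v * ‖z‖ * Real.log p) ≤ Real.sqrt (2 * R * u) := by
      apply Real.sqrt_le_sqrt
      rw [hu]; nlinarith
    set s : ℝ := Real.sqrt (2 * R * u) with hs
    have hs0 : 0 ≤ s := Real.sqrt_nonneg _
    have hs2 : s ^ 2 = 2 * R * u := Real.sq_sqrt (by positivity)
    have hε2 : ε ^ 2 * s ^ 2 = ε ^ 2 * (2 * R * u) := by rw [hs2]
    have hstep : 2 * ε * s ≤ ε ^ 2 / 2 * u + 4 * R := by
      nlinarith [sq_nonneg (ε * s - 4 * R)]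
    have h2 : 2 * s ≤ ε / 2 * u + 4 * R / ε := by
      rw [← mul_le_mul_iff_of_pos_left hε]
      have he : ε * (ε / 2 * u + 4 * R / ε) = ε ^ 2 / 2 * u + 4 * R := by
        field_simp
      rw [he]; nlinarith
    have h3 : 2 * Real.sqrt (2 * v * ‖z‖ * Real.log p)
        ≤ ε / 2 * u + 4 * R / ε := by
      calc 2 * Real.sqrt (2 * v * ‖z‖ * Real.log p) ≤ 2 * s := by linarith
        _ ≤ _ := h2
    calc 2 * Real.exp (2 * Real.sqrt (2 * v * ‖z‖ * Real.log p))
        ≤ 2 * Real.exp (ε / 2 * u + 4 * R / ε) := by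
          have := Real.exp_le_exp.mpr h3
          linarith
      _ = A * (p : ℝ) ^ (v * (ε / 2)) := by
          rw [Real.rpow_def_of_pos hp0, hA, mul_assoc, ← Real.exp_add]
          have he : ε / 2 * u + 4 * R / ε = 4 * R / ε + Real.log p * (v * (ε / 2)) := by
            rw [hu]; ring
          rw [he]
  -- product bound
  have step1 : (∏ p ∈ n.primeFactors,
        2 * Real.exp (2 * Real.sqrt (2 * (n.factorization p : ℝ) * ‖z‖ * Real.log p)))
      ≤ ∏ p ∈ n.primeFactors, A * (p : ℝ) ^ (((n.factorization p : ℝ)) * (ε / 2)) := by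
    apply Finset.prod_le_prod
    · intro p hp; positivity
    · exact key
  have step2 : (∏ p ∈ n.primeFactors, A * (p : ℝ) ^ (((n.factorization p : ℝ)) * (ε / 2)))
      = A ^ n.primeFactors.card * (n : ℝ) ^ (ε / 2) := by
    rw [Finset.prod_mul_distrib, Finset.prod_const]
    congr 1
    have h1 : ∀ p ∈ n.primeFactors, (p : ℝ) ^ (((n.factorization p : ℝ)) * (ε / 2))
        = ((p ^ n.factorization p : ℕ) : ℝ) ^ (ε / 2) := by
      intro p hp
      have hp0 : (0:ℝ) ≤ p := Nat.cast_nonneg _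
      rw [Real.rpow_mul hp0, Real.rpow_natCast]
      push_cast
      ring_nf
    rw [Finset.prod_congr rfl h1, Real.finset_prod_rpow _ _ (fun p _ => by positivity)]
    congr 1
    rw [← Nat.cast_prod]
    congr 1
    have := Nat.factorization_prod_pow_eq_self (n := n) (by omega)
    simpa [Finsupp.prod] using this
  -- bound A ^ ω(n)
  have step3 : A ^ n.primeFactors.card ≤ A ^ B * (n : ℝ) ^ (ε / 2) := by
    classical
    set S := n.primeFactors.filter (fun p => p < B) with hS
    set L := n.primeFactors.filter (fun p => ¬ p < B) with hL
    have hcard : n.primeFactors.card = S.card + L.card :=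
      (Finset.card_filter_add_card_filter_not (fun p => p < B)).symm
    rw [hcard, pow_add]
    have hSB : S.card ≤ B := by
      have : S ⊆ Finset.range B := by
        intro p hp
        simp only [hS, Finset.mem_filter] at hp
        exact Finset.mem_range.mpr hp.2
      simpa using Finset.card_le_card this
    have hSb : A ^ S.card ≤ A ^ B := pow_le_pow_right₀ hA1 hSB
    have hLb : A ^ L.card ≤ (n : ℝ) ^ (ε / 2) := by
      have hAp : ∀ p ∈ L, A ≤ (p : ℝ) ^ (ε / 2) := by
        intro p hp
        simp only [hL, Finset.mem_filter, not_lt] at hp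
        have hBp : (A ^ (2 / ε) : ℝ) ≤ p := by
          calc (A ^ (2 / ε) : ℝ) ≤ B := Nat.le_ceil _
            _ ≤ p := by exact_mod_cast hp.2
        calc A = (A ^ (2 / ε)) ^ (ε / 2) := by
              rw [← Real.rpow_mul hA0.le]
              rw [div_mul_div_comm]
              rw [show 2 * ε / (ε * 2) = 1 by field_simp]
              rw [Real.rpow_one]
          _ ≤ (p : ℝ) ^ (ε / 2) :=
              Real.rpow_le_rpow (by positivity) hBp (by positivity)
      calc A ^ L.card = ∏ _p ∈ L, A := by rw [Finset.prod_const]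
        _ ≤ ∏ p ∈ L, (p : ℝ) ^ (ε / 2) := Finset.prod_le_prod (fun _ _ => hA0.le) hAp
        _ = ((∏ p ∈ L, p : ℕ) : ℝ) ^ (ε / 2) := by
            rw [Real.finset_prod_rpow _ _ (fun p _ => by positivity), Nat.cast_prod]
        _ ≤ (n : ℝ) ^ (ε / 2) := by
            apply Real.rpow_le_rpow (by positivity) _ (by positivity)
            have hdvd : (∏ p ∈ L, p) ∣ n := by
              refine dvd_trans (Finset.prod_dvd_prod_of_subset _ _ _ ?_) (Nat.prod_primeFactors_dvd n)
              exact Finset.filter_subset _ _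
            exact_mod_cast Nat.le_of_dvd (by omega) hdvd
    exact mul_le_mul hSb hLb (by positivity) (by positivity)
  refine le_trans step1 ?_
  rw [step2]
  refine le_trans (mul_le_mul_of_nonneg_right step3 (by positivity)) ?_
  rw [mul_assoc, ← Real.rpow_add hn0, add_halves]
end

section
/- Let ρ > 0, ε > 0 and let F(z) = Σ_{k≥1} a_k z^k be a power series with complex coefficients absolutely convergent for |z| < ρ + ε, with a_1 ≠ 0. Set ρ' = |a_1| / (√2 · Σ_{k≥2} k|a_k|ρ^{k-2}). Then for every r < min(ρ, ρ'), F' has no zero on the closed disc of radius r and F is injective on that disc. -/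
/-!
For `‖z₁‖, ‖z₂‖ ≤ R ≤ ρ` the difference quotient of `F` is
`Σ a_k (z₂^{k-1} + z₂^{k-2} z₁ + ⋯ + z₁^{k-1})`, whose terms with `k ≥ 2` are bounded by
`R k ‖a_k‖ ρ^{k-2}`. Hence it stays within `R Σ_{k≥2} k ‖a_k‖ ρ^{k-2} < ‖a_1‖ / √2 ≤ ‖a_1‖` of `a_1`
when `R < ρ'`, so it never vanishes, and neither does its limit `F'`.
-/

open Finset Filter Metric Topology Asymptotics

theorem summable_add_two_mul_norm_mul_pow {E : Type*} [SeminormedAddCommGroup E] {a : ℕ → E}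
    {ρ q : ℝ} (hρq : |ρ| < q) (ha : Summable fun k => ‖a k‖ * q ^ k) :
    Summable fun k : ℕ => ((k : ℝ) + 2) * ‖a (k + 2)‖ * ρ ^ k := by
  have hq : 0 < q := (abs_nonneg ρ).trans_lt hρq
  have hratio : |ρ / q| < 1 := by rwa [abs_div, abs_of_pos hq, div_lt_one hq]
  have htend : Tendsto (fun k : ℕ => ((k : ℝ) + 2) * (ρ / q) ^ k) atTop (𝓝 0) := by
    simpa [add_mul] using (tendsto_self_mul_const_pow_of_abs_lt_one hratio).add
      ((tendsto_pow_atTop_nhds_zero_of_abs_lt_one hratio).const_mul 2)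
  have hshift : Summable fun k => ‖a (k + 2)‖ * q ^ k := by
    have := ((summable_nat_add_iff 2).mpr ha).div_const (q ^ 2)
    refine this.congr fun k => ?_
    rw [pow_add, ← mul_assoc, mul_div_cancel_right₀ _ (by positivity)]
  refine summable_of_isBigO_nat hshift ?_
  have := (htend.isBigO_one ℝ).mul (isBigO_refl (fun k => ‖a (k + 2)‖ * q ^ k) atTop)
  refine (this.congr_left fun k => ?_).congr_right fun k => one_mul _
  rw [div_pow]
  field_simp

section NormedField

variable {𝕜 : Type*} [NormedField 𝕜]

theorem norm_geom_sum₂_le {x y : 𝕜} {R : ℝ} (hx : ‖x‖ ≤ R) (hy : ‖y‖ ≤ R) (n : ℕ) :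
    ‖∑ i ∈ range n, x ^ i * y ^ (n - 1 - i)‖ ≤ n * R ^ (n - 1) := by
  have hR : 0 ≤ R := (norm_nonneg x).trans hx
  calc ‖∑ i ∈ range n, x ^ i * y ^ (n - 1 - i)‖
      ≤ ∑ i ∈ range n, ‖x ^ i * y ^ (n - 1 - i)‖ := norm_sum_le _ _
    _ ≤ ∑ _i ∈ range n, R ^ (n - 1) := by
        refine sum_le_sum fun i hi => ?_
        rw [norm_mul, norm_pow, norm_pow, ← Nat.add_sub_cancel' (Nat.le_sub_one_of_lt
          (mem_range.mp hi)), pow_add, Nat.add_sub_cancel_left]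
        gcongr
    _ = n * R ^ (n - 1) := by rw [sum_const, card_range, nsmul_eq_mul]

theorem hasSum_slope_of_hasSum_pow {a : ℕ → 𝕜} {F : 𝕜 → 𝕜} {z₁ z₂ : 𝕜}
    (h₁ : HasSum (fun k => a k * z₁ ^ k) (F z₁)) (h₂ : HasSum (fun k => a k * z₂ ^ k) (F z₂))
    (hne : z₁ ≠ z₂) :
    HasSum (fun k => a k * ∑ i ∈ range k, z₂ ^ i * z₁ ^ (k - 1 - i)) (slope F z₁ z₂) := by
  have hsub : z₂ - z₁ ≠ 0 := sub_ne_zero.mpr hne.symm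
  rw [slope_def_field]
  convert (h₂.sub h₁).div_const (z₂ - z₁) using 1
  ext k
  rw [← mul_sub, ← geom_sum₂_mul, ← mul_assoc, mul_div_cancel_right₀ _ hsub]

theorem norm_slope_sub_coeff_one_le {a : ℕ → 𝕜} {F : 𝕜 → 𝕜} {ρ R : ℝ} {z₁ z₂ : 𝕜}
    (hS : Summable fun k : ℕ => ((k : ℝ) + 2) * ‖a (k + 2)‖ * ρ ^ k) (hRρ : R ≤ ρ)
    (hz₁ : ‖z₁‖ ≤ R) (hz₂ : ‖z₂‖ ≤ R)
    (h₁ : HasSum (fun k => a k * z₁ ^ k) (F z₁)) (h₂ : HasSum (fun k => a k * z₂ ^ k) (F z₂))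
    (hne : z₁ ≠ z₂) :
    ‖slope F z₁ z₂ - a 1‖ ≤ R * ∑' k : ℕ, ((k : ℝ) + 2) * ‖a (k + 2)‖ * ρ ^ k := by
  have hR : 0 ≤ R := (norm_nonneg z₁).trans hz₁
  have htail := (hasSum_nat_add_iff' (f := fun k => a k * ∑ i ∈ range k, z₂ ^ i * z₁ ^ (k - 1 - i))
    2).mpr (hasSum_slope_of_hasSum_pow h₁ h₂ hne)
  have hfirst : ∑ i ∈ range 2, a i * ∑ j ∈ range i, z₂ ^ j * z₁ ^ (i - 1 - j) = a 1 := by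
    simp [sum_range_succ]
  rw [hfirst] at htail
  refine htail.norm_le_of_bounded (hS.hasSum.mul_left R) fun k => ?_
  calc ‖a (k + 2) * ∑ i ∈ range (k + 2), z₂ ^ i * z₁ ^ (k + 2 - 1 - i)‖
      ≤ ‖a (k + 2)‖ * (((k : ℝ) + 2) * R ^ (k + 1)) := by
        rw [norm_mul]
        gcongr
        exact_mod_cast norm_geom_sum₂_le hz₂ hz₁ (k + 2)
    _ ≤ ‖a (k + 2)‖ * (((k : ℝ) + 2) * (R * ρ ^ k)) := by
        rw [pow_succ']
        gcongr
    _ = R * (((k : ℝ) + 2) * ‖a (k + 2)‖ * ρ ^ k) := by ring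

end NormedField

theorem hasFPowerSeriesOnBall_ofScalars_of_hasSum {𝕜 : Type*} [NontriviallyNormedField 𝕜]
    {a : ℕ → 𝕜} {F : 𝕜 → 𝕜} {q : ℝ} (hq : 0 < q) (ha : Summable fun k => ‖a k‖ * q ^ k)
    (hF : ∀ z : 𝕜, ‖z‖ < q → HasSum (fun k => a k * z ^ k) (F z)) :
    HasFPowerSeriesOnBall F (FormalMultilinearSeries.ofScalars 𝕜 a) 0 (ENNReal.ofReal q) where
  r_le := by
    refine (FormalMultilinearSeries.ofScalars 𝕜 a).le_radius_of_summable_norm ?_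
    simpa [FormalMultilinearSeries.ofScalars_norm, Real.coe_toNNReal q hq.le] using ha
  r_pos := ENNReal.ofReal_pos.mpr hq
  hasSum {y} hy := by
    rw [eball_ofReal, mem_ball_zero_iff] at hy
    simpa [FormalMultilinearSeries.ofScalars_apply_eq, mul_comm] using hF y hy

theorem deriv_ne_zero_of_norm_slope_sub_le {𝕜 E : Type*} [NontriviallyNormedField 𝕜]
    [NormedAddCommGroup E] [NormedSpace 𝕜 E] {f : 𝕜 → E} {z : 𝕜} {s : Set 𝕜} {c : E} {M : ℝ}
    (hM : M < ‖c‖) (hf : DifferentiableAt 𝕜 f z) (hs : s ∈ 𝓝 z)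
    (h : ∀ y ∈ s, y ≠ z → ‖slope f z y - c‖ ≤ M) : deriv f z ≠ 0 := by
  have hderiv : ‖deriv f z - c‖ ≤ M := by
    refine le_of_tendsto ((hasDerivAt_iff_tendsto_slope.mp hf.hasDerivAt).sub_const c).norm ?_
    filter_upwards [self_mem_nhdsWithin, mem_nhdsWithin_of_mem_nhds hs] with y hyz hys
    exact h y hys hyz
  intro hzero
  rw [hzero, zero_sub, norm_neg] at hderiv
  exact hderiv.not_gt hM

theorem Set.injOn_of_norm_slope_sub_le {𝕜 E : Type*} [NormedField 𝕜] [NormedAddCommGroup E]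
    [NormedSpace 𝕜 E] {f : 𝕜 → E} {s : Set 𝕜} {c : E} {M : ℝ} (hM : M < ‖c‖)
    (h : ∀ x ∈ s, ∀ y ∈ s, x ≠ y → ‖slope f x y - c‖ ≤ M) : Set.InjOn f s := by
  intro x hx y hy hxy
  by_contra hne
  have := h x hx y hy hne
  rw [slope, hxy, vsub_self, smul_zero, zero_sub, norm_neg] at this
  exact this.not_gt hM

theorem mul_lt_of_lt_div_sqrt_two_mul {t S A : ℝ} (ht : 0 < t) (hS : 0 ≤ S)
    (h : t < A / (√2 * S)) : t * S < A := by
  rcases hS.eq_or_lt with rfl | hS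
  · rw [mul_zero, div_zero] at h
    linarith
  rw [lt_div_iff₀ (by positivity)] at h
  calc t * S ≤ t * (√2 * S) := by gcongr; exact le_mul_of_one_le_left hS.le Real.one_lt_sqrt_two.le
    _ < A := h

theorem injectivity_radius_general (ρ ε : ℝ) (hρ : 0 < ρ) (hε : 0 < ε)
    (a : ℕ → ℂ)
    (hconv : ∀ x : ℝ, 0 ≤ x → x < ρ + ε → Summable fun k => ‖a k‖ * x ^ k)
    (F : ℂ → ℂ) (hF : ∀ z : ℂ, ‖z‖ < ρ + ε → HasSum (fun k => a k * z ^ k) (F z))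
    (ρ' : ℝ)
    (hρ' : ρ' = ‖a 1‖ / (Real.sqrt 2 * ∑' k : ℕ, ((k : ℝ) + 2) * ‖a (k + 2)‖ * ρ ^ k))
    (r : ℝ) (hr : r < min ρ ρ') :
    (∀ z ∈ Metric.closedBall (0 : ℂ) r, deriv F z ≠ 0) ∧
    Set.InjOn F (Metric.closedBall (0 : ℂ) r) := by
  rcases lt_or_ge r 0 with hr0 | hr0
  · simp [closedBall_eq_empty.2 hr0]
  -- The slope bound is proved on a larger disc so that it holds near every point of the smaller one.
  obtain ⟨R, hrR, hR⟩ := exists_between hr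
  rw [lt_min_iff] at hR
  set S := ∑' k : ℕ, ((k : ℝ) + 2) * ‖a (k + 2)‖ * ρ ^ k
  obtain ⟨q, hρq, hq⟩ := exists_between (lt_add_of_pos_right ρ hε)
  have hq0 : 0 < q := hρ.trans hρq
  have hqconv := hconv q hq0.le hq
  have hRS : R * S < ‖a 1‖ := mul_lt_of_lt_div_sqrt_two_mul (hr0.trans_lt hrR)
    (tsum_nonneg fun k => by positivity) (hρ' ▸ hR.2)
  have hslope : ∀ z₁ ∈ closedBall (0 : ℂ) R, ∀ z₂ ∈ closedBall (0 : ℂ) R, z₁ ≠ z₂ →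
      ‖slope F z₁ z₂ - a 1‖ ≤ R * S := by
    intro z₁ hz₁ z₂ hz₂ hne
    rw [mem_closedBall_zero_iff] at hz₁ hz₂
    exact norm_slope_sub_coeff_one_le (summable_add_two_mul_norm_mul_pow
      ((abs_of_pos hρ).trans_lt hρq) hqconv) hR.1.le
      hz₁ hz₂ (hF z₁ (by linarith)) (hF z₂ (by linarith)) hne
  refine ⟨fun z hz => ?_,
    (Set.injOn_of_norm_slope_sub_le hRS hslope).mono (closedBall_subset_closedBall hrR.le)⟩
  have hzq : z ∈ eball (0 : ℂ) (ENNReal.ofReal q) := by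
    rw [eball_ofReal]
    exact closedBall_subset_ball (by linarith) hz
  have hdiff := ((hasFPowerSeriesOnBall_ofScalars_of_hasSum hq0 hqconv
    fun z hz => hF z (by linarith)).analyticAt_of_mem hzq).differentiableAt
  exact deriv_ne_zero_of_norm_slope_sub_le hRS hdiff
    (closedBall_mem_nhds_of_mem (closedBall_subset_ball hrR hz))
    fun y hy hyz => hslope z (closedBall_subset_closedBall hrR.le hz) y hy hyz.symm

/-- Explicit Jessen–Wintner injectivity lemma: if `F(z) = Σ_{k≥1} a_k z^k` converges
absolutely for `|z| < ρ + ε`, `a_1 ≠ 0`, and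
`ρ' = |a_1| / (√2 Σ_{k≥2} k |a_k| ρ^{k-2})`, then for `r < min(ρ, ρ')` the derivative `F'`
has no zero on the closed disc of radius `r` and `F` is injective there. -/
theorem injectivity_radius (ρ ε : ℝ) (hρ : 0 < ρ) (hε : 0 < ε)
    (a : ℕ → ℂ) (ha0 : a 0 = 0) (ha1 : a 1 ≠ 0)
    (hconv : ∀ x : ℝ, 0 ≤ x → x < ρ + ε → Summable fun k => ‖a k‖ * x ^ k)
    (F : ℂ → ℂ) (hF : ∀ z : ℂ, ‖z‖ < ρ + ε → HasSum (fun k => a k * z ^ k) (F z))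
    (ρ' : ℝ)
    (hρ' : ρ' = ‖a 1‖ / (Real.sqrt 2 * ∑' k : ℕ, ((k : ℝ) + 2) * ‖a (k + 2)‖ * ρ ^ k))
    (r : ℝ) (hr : r < min ρ ρ') :
    (∀ z ∈ Metric.closedBall (0 : ℂ) r, deriv F z ≠ 0) ∧
    Set.InjOn F (Metric.closedBall (0 : ℂ) r) :=
  injectivity_radius_general ρ ε hρ hε a hconv F hF ρ' hρ' r hr
end

section
/- Let F(z) = Σ_{k≥1} a_k z^k be absolutely convergent for |z| < ρ + ε with a_1 ≠ 0, and set ρ' = |a_1|/(√2·Σ_{k≥2}k|a_k|ρ^{k-2}) and ρ'' = |a_1|(2-√2)/(2·Σ_{k≥2}k(k-1)|a_k|ρ^{k-2}). Then for every r < min(ρ, ρ', ρ''), one has |z F''(z)/F'(z)| < 1 for all z with |z| = r. -/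
set_option maxHeartbeats 1000000

/-- first-derivative coefficient function -/
def dcoef (a : ℕ → ℂ) (n : ℕ) (y : ℂ) : ℂ := (n : ℂ) * a n * y ^ (n - 1)

/-- second-derivative coefficient function -/
def d2coef (a : ℕ → ℂ) (n : ℕ) (y : ℂ) : ℂ :=
  (n : ℂ) * ((n - 1 : ℕ) : ℂ) * a n * y ^ (n - 2)

/-- Convexity criterion bound: with `F(z) = Σ_{k≥1} a_k z^k` as in the injectivity lemma,
`ρ' = |a_1|/(√2 Σ_{k≥2} k|a_k|ρ^{k-2})` and
`ρ'' = |a_1|(2-√2)/(2 Σ_{k≥2} k(k-1)|a_k|ρ^{k-2})`, for every `r < min(ρ, ρ', ρ'')`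
one has `|z F''(z)/F'(z)| < 1` on `|z| = r`. -/
theorem convexity_radius (ρ ε : ℝ) (hρ : 0 < ρ) (hε : 0 < ε)
    (a : ℕ → ℂ) (ha0 : a 0 = 0) (ha1 : a 1 ≠ 0)
    (hconv : ∀ x : ℝ, 0 ≤ x → x < ρ + ε → Summable fun k => ‖a k‖ * x ^ k)
    (F : ℂ → ℂ) (hF : ∀ z : ℂ, ‖z‖ < ρ + ε → HasSum (fun k => a k * z ^ k) (F z))
    (ρ' ρ'' : ℝ)
    (hρ' : ρ' = ‖a 1‖ / (Real.sqrt 2 * ∑' k : ℕ, ((k : ℝ) + 2) * ‖a (k + 2)‖ * ρ ^ k))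
    (hρ'' : ρ'' = ‖a 1‖ * (2 - Real.sqrt 2) /
      (2 * ∑' k : ℕ, ((k : ℝ) + 2) * ((k : ℝ) + 1) * ‖a (k + 2)‖ * ρ ^ k))
    (r : ℝ) (hr : r < min ρ (min ρ' ρ'')) :
    ∀ z : ℂ, ‖z‖ = r → ‖z * deriv (deriv F) z / deriv F z‖ < 1 := by
  intro z hz
  have hr0 : (0 : ℝ) ≤ r := hz ▸ norm_nonneg z
  have hrρ : r < ρ := lt_of_lt_of_le hr (min_le_left _ _)
  have hrρ' : r < ρ' := lt_of_lt_of_le hr ((min_le_right _ _).trans (min_le_left _ _))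
  have hrρ'' : r < ρ'' := lt_of_lt_of_le hr ((min_le_right _ _).trans (min_le_right _ _))
  set A : ℝ := ∑' k : ℕ, ((k : ℝ) + 2) * ‖a (k + 2)‖ * ρ ^ k with hA_def
  set B : ℝ := ∑' k : ℕ, ((k : ℝ) + 2) * ((k : ℝ) + 1) * ‖a (k + 2)‖ * ρ ^ k with hB_def
  -- geometric comparison setup
  set x₀ : ℝ := ρ + ε / 2 with hx₀def
  have hx₀pos : 0 < x₀ := by positivity
  have hρx₀ : ρ < x₀ := by simp only [hx₀def]; linarith
  have hS : Summable fun k => ‖a k‖ * x₀ ^ k :=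
    hconv x₀ hx₀pos.le (by simp only [hx₀def]; linarith)
  set C : ℝ := ∑' k, ‖a k‖ * x₀ ^ k with hCdef
  have hC0 : 0 ≤ C := tsum_nonneg fun k => by positivity
  have hCb : ∀ k, ‖a k‖ * x₀ ^ k ≤ C := fun k => Summable.le_tsum hS k fun j _ => by positivity
  set q : ℝ := ρ / x₀ with hqdef
  have hq0 : 0 ≤ q := by positivity
  have hq1 : q < 1 := (div_lt_one hx₀pos).2 hρx₀
  have hqn : ‖q‖ < 1 := by rwa [Real.norm_of_nonneg hq0]
  have hρq : ρ = x₀ * q := by rw [hqdef]; exact (mul_div_cancel₀ ρ hx₀pos.ne').symm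
  set E : ℝ := C + C / x₀ + C / x₀ ^ 2 with hEdef
  have hE0 : 0 ≤ E := by positivity
  have hE1 : C / x₀ ≤ E := by
    have h1 : 0 ≤ C / x₀ ^ 2 := by positivity
    simp only [hEdef]; linarith
  have hE2 : C / x₀ ^ 2 ≤ E := by
    have h1 : 0 ≤ C / x₀ := by positivity
    simp only [hEdef]; linarith
  have hcoef1 : ∀ k, ‖a (k + 1)‖ * ρ ^ k ≤ C / x₀ * q ^ k := by
    intro k
    have heq : ‖a (k + 1)‖ * ρ ^ k = (‖a (k + 1)‖ * x₀ ^ (k + 1)) * (q ^ k / x₀) := by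
      rw [hρq, mul_pow]; field_simp; ring
    have heq2 : C / x₀ * q ^ k = C * (q ^ k / x₀) := by ring
    rw [heq, heq2]
    exact mul_le_mul_of_nonneg_right (hCb (k + 1)) (by positivity)
  have hcoef2 : ∀ k, ‖a (k + 2)‖ * ρ ^ k ≤ C / x₀ ^ 2 * q ^ k := by
    intro k
    have heq : ‖a (k + 2)‖ * ρ ^ k = (‖a (k + 2)‖ * x₀ ^ (k + 2)) * (q ^ k / x₀ ^ 2) := by
      rw [hρq, mul_pow]; field_simp; ring
    have heq2 : C / x₀ ^ 2 * q ^ k = C * (q ^ k / x₀ ^ 2) := by ring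
    rw [heq, heq2]
    exact mul_le_mul_of_nonneg_right (hCb (k + 2)) (by positivity)
  -- master summable series
  have hmaster : Summable fun k : ℕ => ((k : ℝ) ^ 2 + 4 * (k : ℝ) + 4) * (E * q ^ k) := by
    have h2 := summable_pow_mul_geometric_of_norm_lt_one (R := ℝ) 2 hqn
    have h1 := summable_pow_mul_geometric_of_norm_lt_one (R := ℝ) 1 hqn
    have h0 := summable_pow_mul_geometric_of_norm_lt_one (R := ℝ) 0 hqn
    have hsum := (((h2.add (h1.mul_left 4)).add (h0.mul_left 4)).mul_left E)
    exact hsum.congr fun k => by ring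
  -- key summable series
  have SB : Summable fun k : ℕ => ((k : ℝ) + 2) * ((k : ℝ) + 1) * ‖a (k + 2)‖ * ρ ^ k := by
    refine Summable.of_nonneg_of_le (fun k => by positivity) (fun k => ?_) hmaster
    have hk0 : (0 : ℝ) ≤ (k : ℝ) := Nat.cast_nonneg k
    calc ((k : ℝ) + 2) * ((k : ℝ) + 1) * ‖a (k + 2)‖ * ρ ^ k
        = ((k : ℝ) + 2) * ((k : ℝ) + 1) * (‖a (k + 2)‖ * ρ ^ k) := by ring
      _ ≤ ((k : ℝ) + 2) * ((k : ℝ) + 1) * (C / x₀ ^ 2 * q ^ k) :=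
          mul_le_mul_of_nonneg_left (hcoef2 k) (by nlinarith)
      _ ≤ ((k : ℝ) ^ 2 + 4 * (k : ℝ) + 4) * (E * q ^ k) := by
          have hq' : (0 : ℝ) ≤ q ^ k := pow_nonneg hq0 k
          have h1 : ((k : ℝ) + 2) * ((k : ℝ) + 1) ≤ (k : ℝ) ^ 2 + 4 * (k : ℝ) + 4 := by nlinarith
          have h2 : C / x₀ ^ 2 * q ^ k ≤ E * q ^ k := by gcongr
          have h3 : (0:ℝ) ≤ ((k : ℝ) + 2) * ((k : ℝ) + 1) := by nlinarith
          have h4 : (0:ℝ) ≤ C / x₀ ^ 2 * q ^ k := by positivity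
          nlinarith [mul_le_mul h1 h2 h4 (by nlinarith : (0:ℝ) ≤ (k : ℝ) ^ 2 + 4 * (k : ℝ) + 4)]
  have SA : Summable fun k : ℕ => ((k : ℝ) + 2) * ‖a (k + 2)‖ * ρ ^ k := by
    refine Summable.of_nonneg_of_le (fun k => by positivity) (fun k => ?_) SB
    have hk0 : (0 : ℝ) ≤ (k : ℝ) := Nat.cast_nonneg k
    have h1 : (0:ℝ) ≤ ‖a (k + 2)‖ * ρ ^ k := by positivity
    nlinarith [mul_nonneg (mul_nonneg (by linarith : (0:ℝ) ≤ (k:ℝ)+2) hk0) h1]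
  have SA1 : Summable fun k : ℕ => ((k : ℝ) + 1) * ‖a (k + 1)‖ * ρ ^ k := by
    refine Summable.of_nonneg_of_le (fun k => by positivity) (fun k => ?_) hmaster
    have hk0 : (0 : ℝ) ≤ (k : ℝ) := Nat.cast_nonneg k
    calc ((k : ℝ) + 1) * ‖a (k + 1)‖ * ρ ^ k
        = ((k : ℝ) + 1) * (‖a (k + 1)‖ * ρ ^ k) := by ring
      _ ≤ ((k : ℝ) + 1) * (C / x₀ * q ^ k) :=
          mul_le_mul_of_nonneg_left (hcoef1 k) (by nlinarith)
      _ ≤ ((k : ℝ) ^ 2 + 4 * (k : ℝ) + 4) * (E * q ^ k) := by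
          have hq' : (0 : ℝ) ≤ q ^ k := pow_nonneg hq0 k
          have h1 : ((k : ℝ) + 1) ≤ (k : ℝ) ^ 2 + 4 * (k : ℝ) + 4 := by nlinarith
          have h2 : C / x₀ * q ^ k ≤ E * q ^ k := by gcongr
          have h4 : (0:ℝ) ≤ C / x₀ * q ^ k := by positivity
          nlinarith [mul_le_mul h1 h2 h4 (by nlinarith : (0:ℝ) ≤ (k : ℝ) ^ 2 + 4 * (k : ℝ) + 4)]
  -- summability of derivative bounds
  set u1 : ℕ → ℝ := fun n => (n : ℝ) * ‖a n‖ * ρ ^ (n - 1) with hu1def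
  set u2 : ℕ → ℝ := fun n => (n : ℝ) * ((n - 1 : ℕ) : ℝ) * ‖a n‖ * ρ ^ (n - 2) with hu2def
  have Su1 : Summable u1 := by
    refine (summable_nat_add_iff 1).1 (SA1.congr fun n => ?_)
    simp only [hu1def, Nat.add_sub_cancel]
    push_cast; ring
  have Su2 : Summable u2 := by
    refine (summable_nat_add_iff 2).1 (SB.congr fun n => ?_)
    simp only [hu2def, Nat.add_sub_cancel]
    push_cast; ring
  -- derivative facts
  have hd : ∀ (n : ℕ) (y : ℂ), HasDerivAt (fun w => a n * w ^ n) (dcoef a n y) y := by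
    intro n y
    have h := (hasDerivAt_pow n y).const_mul (a n)
    refine h.congr_deriv ?_
    simp only [dcoef]; ring
  have hd2 : ∀ (n : ℕ) (y : ℂ), HasDerivAt (dcoef a n) (d2coef a n y) y := by
    intro n y
    have h := (hasDerivAt_pow (n - 1) y).const_mul ((n : ℂ) * a n)
    refine h.congr_deriv ?_
    simp only [d2coef, Nat.sub_sub]
    norm_num; ring
  have nrm1 : ∀ (n : ℕ) (y : ℂ), ‖dcoef a n y‖ = (n : ℝ) * ‖a n‖ * ‖y‖ ^ (n - 1) := by
    intro n y
    simp [dcoef, norm_mul, norm_pow]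
  have nrm2 : ∀ (n : ℕ) (y : ℂ),
      ‖d2coef a n y‖ = (n : ℝ) * ((n - 1 : ℕ) : ℝ) * ‖a n‖ * ‖y‖ ^ (n - 2) := by
    intro n y
    simp [d2coef, norm_mul, norm_pow]
  have hb1 : ∀ (n : ℕ), ∀ y ∈ Metric.ball (0 : ℂ) ρ, ‖dcoef a n y‖ ≤ u1 n := by
    intro n y hy
    rw [nrm1]
    have hyρ : ‖y‖ ≤ ρ := by
      rw [Metric.mem_ball, dist_zero_right] at hy; exact hy.le
    simp only [hu1def]
    gcongr
  have hb2 : ∀ (n : ℕ), ∀ y ∈ Metric.ball (0 : ℂ) ρ, ‖d2coef a n y‖ ≤ u2 n := by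
    intro n y hy
    rw [nrm2]
    have hyρ : ‖y‖ ≤ ρ := by
      rw [Metric.mem_ball, dist_zero_right] at hy; exact hy.le
    simp only [hu2def]
    gcongr
  have hzball : z ∈ Metric.ball (0 : ℂ) ρ := by
    rw [Metric.mem_ball, dist_zero_right, hz]; exact hrρ
  have hzball' : ‖z‖ < ρ + ε := by rw [hz]; linarith
  have hBall2 : ∀ y ∈ Metric.ball (0 : ℂ) ρ, ‖y‖ < ρ + ε := by
    intro y hy
    rw [Metric.mem_ball, dist_zero_right] at hy; linarith
  have Sfz : Summable fun n => a n * z ^ n := (hF z hzball').summable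
  have Sdz : Summable fun n => dcoef a n z :=
    Summable.of_norm_bounded Su1 fun n => hb1 n z hzball
  have Sd2z : Summable fun n => d2coef a n z :=
    Summable.of_norm_bounded Su2 fun n => hb2 n z hzball
  have hopen : IsOpen (Metric.ball (0 : ℂ) ρ) := Metric.isOpen_ball
  have hconn : IsPreconnected (Metric.ball (0 : ℂ) ρ) := (convex_ball _ _).isPreconnected
  have hG : ∀ y ∈ Metric.ball (0 : ℂ) ρ,
      HasDerivAt (fun w : ℂ => ∑' n : ℕ, a n * w ^ n) (∑' n : ℕ, dcoef a n y) y := by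
    intro y hy
    exact hasDerivAt_tsum_of_isPreconnected Su1 hopen hconn
      (fun n w hw => hd n w) hb1 hzball Sfz hy
  have hH : ∀ y ∈ Metric.ball (0 : ℂ) ρ,
      HasDerivAt (fun w : ℂ => ∑' n : ℕ, dcoef a n w) (∑' n : ℕ, d2coef a n y) y := by
    intro y hy
    exact hasDerivAt_tsum_of_isPreconnected Su2 hopen hconn
      (fun n w hw => hd2 n w) hb2 hzball Sdz hy
  -- identify deriv F on the ball
  have hFeq : Set.EqOn F (fun w : ℂ => ∑' n : ℕ, a n * w ^ n) (Metric.ball (0 : ℂ) (ρ + ε)) := by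
    intro y hy
    rw [Metric.mem_ball, dist_zero_right] at hy
    exact ((hF y hy).tsum_eq).symm
  have hderivF : ∀ y ∈ Metric.ball (0 : ℂ) ρ, deriv F y = ∑' n : ℕ, dcoef a n y := by
    intro y hy
    have hybig : y ∈ Metric.ball (0 : ℂ) (ρ + ε) := by
      rw [Metric.mem_ball, dist_zero_right]; exact hBall2 y hy
    have h1 : F =ᶠ[nhds y] fun w : ℂ => ∑' n : ℕ, a n * w ^ n :=
      Filter.eventuallyEq_of_mem (Metric.isOpen_ball.mem_nhds hybig) hFeq
    rw [h1.deriv_eq]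
    exact (hG y hy).deriv
  have hdF : deriv F z = ∑' n : ℕ, dcoef a n z := hderivF z hzball
  have hdF2 : deriv (deriv F) z = ∑' n : ℕ, d2coef a n z := by
    have h1 : deriv F =ᶠ[nhds z] fun w : ℂ => ∑' n : ℕ, dcoef a n w :=
      Filter.eventuallyEq_of_mem (hopen.mem_nhds hzball) hderivF
    rw [h1.deriv_eq]
    exact (hH z hzball).deriv
  -- split off first terms of F'
  have Sdz1 : Summable fun n => dcoef a (n + 1) z :=
    (summable_nat_add_iff (f := fun n => dcoef a n z) 1).2 Sdz
  have Sdz2 : Summable fun n => dcoef a (n + 2) z :=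
    (summable_nat_add_iff (f := fun n => dcoef a n z) 2).2 Sdz
  have hsplit : ∑' n : ℕ, dcoef a n z = a 1 + ∑' n : ℕ, dcoef a (n + 2) z := by
    rw [Summable.tsum_eq_zero_add Sdz, Summable.tsum_eq_zero_add Sdz1]
    have h0 : dcoef a 0 z = 0 := by simp [dcoef]
    have h1 : dcoef a 1 z = a 1 := by simp [dcoef]
    rw [h0, h1, zero_add]
  -- tail bound for F'
  have htermA : ∀ n : ℕ, ‖dcoef a (n + 2) z‖ ≤ r * (((n : ℝ) + 2) * ‖a (n + 2)‖ * ρ ^ n) := by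
    intro n
    rw [nrm1, hz]
    have h1 : (n + 2 - 1 : ℕ) = n + 1 := by omega
    rw [h1]
    have h2 : r ^ n ≤ ρ ^ n := pow_le_pow_left₀ hr0 hrρ.le n
    have h3 : ((n + 2 : ℕ) : ℝ) = (n : ℝ) + 2 := by push_cast; ring
    rw [h3]
    calc ((n : ℝ) + 2) * ‖a (n + 2)‖ * r ^ (n + 1)
        = r * (((n : ℝ) + 2) * ‖a (n + 2)‖ * r ^ n) := by ring
      _ ≤ r * (((n : ℝ) + 2) * ‖a (n + 2)‖ * ρ ^ n) := by gcongr
  have hnormtailA : ‖∑' n : ℕ, dcoef a (n + 2) z‖ ≤ r * A := by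
    have hsnorm : Summable fun n => ‖dcoef a (n + 2) z‖ :=
      Summable.of_nonneg_of_le (fun n => norm_nonneg _) htermA (SA.mul_left r)
    calc ‖∑' n : ℕ, dcoef a (n + 2) z‖
        ≤ ∑' n : ℕ, ‖dcoef a (n + 2) z‖ := norm_tsum_le_tsum_norm hsnorm
      _ ≤ ∑' n : ℕ, r * (((n : ℝ) + 2) * ‖a (n + 2)‖ * ρ ^ n) :=
          Summable.tsum_le_tsum htermA hsnorm (SA.mul_left r)
      _ = r * A := tsum_mul_left
  have hF'lower : ‖a 1‖ - r * A ≤ ‖deriv F z‖ := by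
    rw [hdF, hsplit]
    have h3 : ‖a 1‖ ≤ ‖a 1 + ∑' n : ℕ, dcoef a (n + 2) z‖ + ‖∑' n : ℕ, dcoef a (n + 2) z‖ := by
      calc ‖a 1‖ = ‖(a 1 + ∑' n : ℕ, dcoef a (n + 2) z) - ∑' n : ℕ, dcoef a (n + 2) z‖ := by
            congr 1; ring
        _ ≤ _ := norm_sub_le _ _
    linarith [hnormtailA]
  -- bound for F''
  have Sd2z1 : Summable fun n => d2coef a (n + 1) z :=
    (summable_nat_add_iff (f := fun n => d2coef a n z) 1).2 Sd2z
  have Sd2z2 : Summable fun n => d2coef a (n + 2) z :=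
    (summable_nat_add_iff (f := fun n => d2coef a n z) 2).2 Sd2z
  have hsplit2 : ∑' n : ℕ, d2coef a n z = ∑' n : ℕ, d2coef a (n + 2) z := by
    rw [Summable.tsum_eq_zero_add Sd2z, Summable.tsum_eq_zero_add Sd2z1]
    have h0 : d2coef a 0 z = 0 := by simp [d2coef]
    have h1 : d2coef a 1 z = 0 := by simp [d2coef]
    rw [h0, h1, zero_add, zero_add]
  have htermB : ∀ n : ℕ,
      ‖d2coef a (n + 2) z‖ ≤ ((n : ℝ) + 2) * ((n : ℝ) + 1) * ‖a (n + 2)‖ * ρ ^ n := by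
    intro n
    rw [nrm2, hz]
    have h1 : (n + 2 - 1 : ℕ) = n + 1 := by omega
    have h2 : (n + 2 - 2 : ℕ) = n := by omega
    rw [h1, h2]
    have h3 : ((n + 2 : ℕ) : ℝ) = (n : ℝ) + 2 := by push_cast; ring
    have h4 : ((n + 1 : ℕ) : ℝ) = (n : ℝ) + 1 := by push_cast; ring
    rw [h3, h4]
    have h5 : r ^ n ≤ ρ ^ n := pow_le_pow_left₀ hr0 hrρ.le n
    gcongr
  have hF''bound : ‖deriv (deriv F) z‖ ≤ B := by
    rw [hdF2, hsplit2]
    have hsnorm : Summable fun n => ‖d2coef a (n + 2) z‖ :=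
      Summable.of_nonneg_of_le (fun n => norm_nonneg _) htermB SB
    calc ‖∑' n : ℕ, d2coef a (n + 2) z‖
        ≤ ∑' n : ℕ, ‖d2coef a (n + 2) z‖ := norm_tsum_le_tsum_norm hsnorm
      _ ≤ ∑' n : ℕ, ((n : ℝ) + 2) * ((n : ℝ) + 1) * ‖a (n + 2)‖ * ρ ^ n :=
          Summable.tsum_le_tsum htermB hsnorm SB
      _ = B := rfl
  -- positivity of A and B
  have hA0 : 0 ≤ A := tsum_nonneg fun k => by positivity
  have hB0 : 0 ≤ B := tsum_nonneg fun k => by positivity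
  have hApos : 0 < A := by
    rcases lt_or_eq_of_le hA0 with h | h
    · exact h
    · exfalso
      rw [hρ', ← h, mul_zero, div_zero] at hrρ'
      linarith
  have hBpos : 0 < B := by
    rcases lt_or_eq_of_le hB0 with h | h
    · exact h
    · exfalso
      rw [hρ'', ← h, mul_zero, div_zero] at hrρ''
      linarith
  -- the arithmetic with √2
  have hs2sq : Real.sqrt 2 ^ 2 = 2 := Real.sq_sqrt (by norm_num)
  have hs2pos : (0 : ℝ) < Real.sqrt 2 := Real.sqrt_pos.2 (by norm_num)
  have ha1pos : 0 < ‖a 1‖ := norm_pos_iff.2 ha1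
  rw [hρ'] at hrρ'
  rw [hρ''] at hrρ''
  have h1 : r * (Real.sqrt 2 * A) < ‖a 1‖ :=
    (lt_div_iff₀ (by positivity)).1 hrρ'
  have h2 : r * (2 * B) < ‖a 1‖ * (2 - Real.sqrt 2) :=
    (lt_div_iff₀ (by positivity)).1 hrρ''
  have key : r * B < ‖a 1‖ - r * A := by
    nlinarith [mul_lt_mul_of_pos_left h1 hs2pos, hs2sq]
  have hden : 0 < ‖a 1‖ - r * A := by
    have : 0 ≤ r * B := mul_nonneg hr0 hB0
    linarith
  have hF'pos : 0 < ‖deriv F z‖ := lt_of_lt_of_le hden hF'lower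
  rw [norm_div, norm_mul, hz, div_lt_one hF'pos]
  calc r * ‖deriv (deriv F) z‖ ≤ r * B := by gcongr
    _ < ‖a 1‖ - r * A := key
    _ ≤ ‖deriv F z‖ := hF'lower
end

section
/- Let λ > 0 and let (a_j)_{j≥1} be complex numbers with d := 1 - 2λ Σ_{j≥1} |a_j|² > 0. For each n, let t_n(θ₁,...,θ_n) = Σ_{j=1}^n a_j e^{iθ_j}. Then ∫_{[0,2π]^n} exp(2λ |t_n(θ)|²) dθ₁···dθ_n/(2π)^n ≤ 1/(1 - 2λ Σ_{j=1}^n |a_j|²) ≤ d^{-1}. -/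
open Real Set MeasureTheory intervalIntegral
open scoped ENNReal

noncomputable def cosPow (m : ℕ) : ℝ := ∫ x in (0:ℝ)..(2*π), Real.cos x ^ m

lemma cosPow_zero : cosPow 0 = 2 * π := by simp [cosPow]

lemma cosPow_one : cosPow 1 = 0 := by simp [cosPow]

lemma cosPow_succ_succ (m : ℕ) :
    cosPow (m + 2) = (m + 1) / (m + 2) * cosPow m := by
  unfold cosPow
  rw [integral_cos_pow]
  simp [Real.sin_two_pi]

lemma cosPow_nonneg (m : ℕ) : 0 ≤ cosPow m := by
  induction m using Nat.strong_induction_on with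
  | _ m ih =>
    match m with
    | 0 => rw [cosPow_zero]; positivity
    | 1 => rw [cosPow_one]
    | (k+2) =>
      rw [cosPow_succ_succ]
      have := ih k (by omega)
      positivity

lemma cosPow_odd (m : ℕ) : cosPow (2 * m + 1) = 0 := by
  induction m with
  | zero => simpa using cosPow_one
  | succ k ih =>
    have : 2 * (k + 1) + 1 = (2 * k + 1) + 2 := by ring
    rw [this, cosPow_succ_succ, ih, mul_zero]

lemma cosPow_even_bound (r : ℝ) (m : ℕ) :
    r ^ (2 * m) / (2 * m).factorial * cosPow (2 * m) ≤ 2 * π * ((r ^ 2 / 4) ^ m / m.factorial) := by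
  induction m with
  | zero => simp [cosPow_zero]
  | succ k ih =>
    have h2 : 2 * (k + 1) = (2 * k) + 2 := by ring
    rw [h2, cosPow_succ_succ]
    have hfac : ((2 * k + 2).factorial : ℝ) = ((2*k).factorial : ℝ) * (2*k+1) * (2*k+2) := by
      have : (2 * k) + 2 = ((2*k) + 1) + 1 := by ring
      rw [this, Nat.factorial_succ, Nat.factorial_succ]
      push_cast
      ring
    have hpow : r ^ (2 * k + 2) = r ^ (2 * k) * r ^ 2 := by ring
    have hk : (0:ℝ) < (2 * k : ℝ) + 2 := by positivity
    have hcp := cosPow_nonneg (2 * k)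
    have hfk : (0:ℝ) < ((2*k).factorial : ℝ) := by positivity
    -- LHS = (r^(2k)/(2k)! * cosPow(2k)) * (r^2 * (2k+1) / ((2k+1)(2k+2)(2k+2)))
    have key : r ^ (2 * k + 2) / ((2 * k + 2).factorial : ℝ) * ((((2*k):ℝ) + 1) / ((2*k:ℝ) + 2) * cosPow (2 * k))
        = (r ^ (2 * k) / ((2 * k).factorial : ℝ) * cosPow (2 * k)) * (r ^ 2 / ((2*k:ℝ)+2)^2) := by
      rw [hfac, hpow]
      field_simp
    push_cast
    rw [key]
    have hstep : (r ^ (2 * k) / ((2 * k).factorial : ℝ) * cosPow (2 * k)) * (r ^ 2 / ((2*k:ℝ)+2)^2)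
        ≤ (2 * π * ((r ^ 2 / 4) ^ k / k.factorial)) * (r ^ 2 / ((2*k:ℝ)+2)^2) := by
      apply mul_le_mul_of_nonneg_right ih (by positivity)
    refine hstep.trans ?_
    have h4 : ((2*k:ℝ)+2)^2 = 4 * ((k:ℝ)+1)^2 := by ring
    have hfacs : ((k+1).factorial : ℝ) = (k.factorial : ℝ) * ((k:ℝ)+1) := by
      rw [Nat.factorial_succ]; push_cast; ring
    have hineq : r ^ 2 / ((2*k:ℝ)+2)^2 ≤ (r^2/4) / ((k:ℝ)+1) := by
      rw [h4, div_le_div_iff₀ (by positivity) (by positivity)]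
      have hk0 : (0:ℝ) ≤ (k:ℝ) := Nat.cast_nonneg k
      nlinarith [mul_nonneg (mul_nonneg (sq_nonneg r) hk0) (by positivity : (0:ℝ) ≤ (k:ℝ)+1)]
    calc (2 * π * ((r ^ 2 / 4) ^ k / k.factorial)) * (r ^ 2 / ((2*k:ℝ)+2)^2)
        ≤ (2 * π * ((r ^ 2 / 4) ^ k / k.factorial)) * ((r^2/4) / ((k:ℝ)+1)) := by
          apply mul_le_mul_of_nonneg_left hineq (by positivity)
      _ = 2 * π * ((r ^ 2 / 4) ^ (k+1) / (k+1).factorial) := by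
          rw [hfacs]; field_simp; ring

lemma real_exp_tsum_div (x : ℝ) : Real.exp x = ∑' n : ℕ, x ^ n / n.factorial := by
  rw [Real.exp_eq_exp_ℝ, NormedSpace.exp_eq_tsum_div]

lemma bessel_bound (r : ℝ) :
    ∫ x in (0:ℝ)..(2*π), Real.exp (r * Real.cos x) ≤ 2 * π * Real.exp (r ^ 2 / 4) := by
  have h2pi : (0:ℝ) ≤ 2 * π := by positivity
  -- term-by-term integration
  have hFcont : ∀ k : ℕ, Continuous fun x : ℝ => (r * Real.cos x) ^ k / k.factorial := by
    intro k; fun_prop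
  have hswap : (∫ x in (0:ℝ)..(2*π), Real.exp (r * Real.cos x))
      = ∑' k : ℕ, ∫ x in Set.Ioc (0:ℝ) (2*π), (r * Real.cos x) ^ k / k.factorial := by
    rw [intervalIntegral.integral_of_le h2pi]
    have hpt : ∀ x : ℝ, Real.exp (r * Real.cos x) = ∑' k : ℕ, (r * Real.cos x) ^ k / k.factorial :=
      fun x => real_exp_tsum_div _
    simp_rw [hpt]
    refine (MeasureTheory.integral_tsum_of_summable_integral_norm ?_ ?_).symm
    · intro k
      exact ((hFcont k).intervalIntegrable 0 (2*π)).1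
    · apply Summable.of_nonneg_of_le (fun k => by positivity)
        (fun k => ?_) ((Real.summable_pow_div_factorial |r|).mul_left (2*π))
      calc ∫ x in Set.Ioc (0:ℝ) (2*π), ‖(r * Real.cos x) ^ k / k.factorial‖
          ≤ ‖∫ x in Set.Ioc (0:ℝ) (2*π), ‖(r * Real.cos x) ^ k / k.factorial‖‖ :=
            le_abs_self _
        _ ≤ (|r| ^ k / k.factorial) * (volume (Set.Ioc (0:ℝ) (2*π))).toReal := by
            apply MeasureTheory.norm_setIntegral_le_of_norm_le_const
              measure_Ioc_lt_top
            intro x _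
            rw [norm_norm]
            have hb : |r * Real.cos x| ≤ |r| := by
              rw [abs_mul]
              exact mul_le_of_le_one_right (abs_nonneg r) (Real.abs_cos_le_one x)
            rw [norm_div, norm_pow, Real.norm_eq_abs, Real.norm_eq_abs,
              abs_of_nonneg (show (0:ℝ) ≤ (k.factorial:ℝ) by positivity)]
            gcongr
        _ = 2 * π * (|r| ^ k / k.factorial) := by
            rw [Real.volume_Ioc, sub_zero, ENNReal.toReal_ofReal h2pi]
            ring
  rw [hswap]
  have hterm : ∀ k : ℕ, (∫ x in Set.Ioc (0:ℝ) (2*π), (r * Real.cos x) ^ k / k.factorial)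
      = r ^ k / k.factorial * cosPow k := by
    intro k
    have hx : ∀ x : ℝ, (r * Real.cos x) ^ k / (k.factorial : ℝ)
        = (r ^ k / k.factorial) * Real.cos x ^ k := by
      intro x; rw [mul_pow]; ring
    simp_rw [hx]
    rw [MeasureTheory.integral_const_mul, cosPow, intervalIntegral.integral_of_le h2pi]
  simp_rw [hterm]
  set f : ℕ → ℝ := fun k => r ^ k / k.factorial * cosPow k with hf
  have hbound_summ : Summable (fun m : ℕ => 2 * π * ((r ^ 2 / 4) ^ m / m.factorial)) :=
    (Real.summable_pow_div_factorial (r ^ 2 / 4)).mul_left (2 * π)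
  have heven_nonneg : ∀ m : ℕ, 0 ≤ f (2 * m) := by
    intro m
    have : (0:ℝ) ≤ r ^ (2 * m) := by rw [pow_mul]; positivity
    have := cosPow_nonneg (2 * m)
    positivity
  have heven_le : ∀ m : ℕ, f (2 * m) ≤ 2 * π * ((r ^ 2 / 4) ^ m / m.factorial) :=
    fun m => cosPow_even_bound r m
  have heven_summ : Summable (fun m : ℕ => f (2 * m)) :=
    Summable.of_nonneg_of_le heven_nonneg heven_le hbound_summ
  have hodd_zero : ∀ m : ℕ, f (2 * m + 1) = 0 := by
    intro m; rw [hf]; simp [cosPow_odd m]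
  have hodd_summ : Summable (fun m : ℕ => f (2 * m + 1)) := by
    simp_rw [hodd_zero]; exact summable_zero
  rw [← tsum_even_add_odd heven_summ hodd_summ]
  have : ∑' m : ℕ, f (2 * m + 1) = 0 := by simp_rw [hodd_zero]; exact tsum_zero
  rw [this, add_zero]
  calc ∑' m : ℕ, f (2 * m) ≤ ∑' m : ℕ, 2 * π * ((r ^ 2 / 4) ^ m / m.factorial) :=
        Summable.tsum_le_tsum heven_le heven_summ hbound_summ
    _ = 2 * π * Real.exp (r ^ 2 / 4) := by
        rw [tsum_mul_left, real_exp_tsum_div]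

lemma integral_exp_re_le (w : ℂ) :
    ∫ x in (0:ℝ)..(2*π), Real.exp ((w * Complex.exp (Complex.I * x)).re)
      ≤ 2 * π * Real.exp ((‖w‖) ^ 2 / 4) := by
  have key : ∀ x : ℝ, (w * Complex.exp (Complex.I * x)).re
      = ‖w‖ * Real.cos (w.arg + x) := by
    intro x
    conv_lhs => rw [← Complex.norm_mul_exp_arg_mul_I w]
    rw [mul_assoc, ← Complex.exp_add]
    have : (↑w.arg * Complex.I + Complex.I * ↑x) = ↑(w.arg + x) * Complex.I := by
      push_cast; ring
    rw [this, Complex.re_ofReal_mul, Complex.exp_ofReal_mul_I_re]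
  simp_rw [key]
  have hper : Function.Periodic (fun y : ℝ => Real.exp (‖w‖ * Real.cos y)) (2 * π) := by
    intro y; simp [Real.cos_add_two_pi]
  calc ∫ x in (0:ℝ)..(2*π), Real.exp (‖w‖ * Real.cos (w.arg + x))
      = ∫ y in (w.arg)..(w.arg + 2*π), Real.exp (‖w‖ * Real.cos y) := by
        rw [intervalIntegral.integral_comp_add_left
          (fun y => Real.exp (‖w‖ * Real.cos y)) w.arg]
        norm_num
    _ = ∫ y in (0:ℝ)..(0 + 2*π), Real.exp (‖w‖ * Real.cos y) :=
        hper.intervalIntegral_add_eq w.arg 0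
    _ ≤ 2 * π * Real.exp ((‖w‖) ^ 2 / 4) := by
        rw [zero_add]
        exact bessel_bound (‖w‖)


lemma inner_bound (c : ℝ) (hc : 0 ≤ c) (a₀ t : ℂ) :
    (∫⁻ x in Set.Icc (0:ℝ) (2*π),
        ENNReal.ofReal (Real.exp (c * ‖a₀ * Complex.exp (Complex.I * x) + t‖ ^ 2)))
      ≤ ENNReal.ofReal ((2*π) *
        (Real.exp (c * ‖a₀‖^2) * Real.exp ((c * (1 + c * ‖a₀‖^2)) * ‖t‖^2))) := by
  have h2pi : (0:ℝ) ≤ 2 * π := by positivity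
  set w : ℂ := ((2*c : ℝ) : ℂ) * (a₀ * (starRingEnd ℂ) t) with hw
  set K : ℝ := Real.exp (c*‖a₀‖^2 + c*‖t‖^2) with hK
  have habs : ∀ x : ℝ, ‖Complex.exp (Complex.I * x)‖ = 1 := by
    intro x
    rw [Complex.norm_exp]
    simp
  have hsplit : ∀ x : ℝ, c * ‖a₀ * Complex.exp (Complex.I * x) + t‖ ^ 2
      = (c*‖a₀‖^2 + c*‖t‖^2) + (w * Complex.exp (Complex.I * x)).re := by
    intro x
    have hns : ‖a₀ * Complex.exp (Complex.I * x) + t‖ ^ 2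
        = ‖a₀‖^2 + ‖t‖^2 + 2 * ((a₀ * Complex.exp (Complex.I * x)) * (starRingEnd ℂ) t).re := by
      simp only [Complex.sq_norm]
      rw [Complex.normSq_add]
      rw [Complex.normSq_mul]
      have : Complex.normSq (Complex.exp (Complex.I * x)) = 1 := by
        rw [← Complex.sq_norm, habs x]; norm_num
      rw [this, mul_one]
    rw [hns]
    have hwre : (w * Complex.exp (Complex.I * x)).re
        = 2 * c * ((a₀ * Complex.exp (Complex.I * x)) * (starRingEnd ℂ) t).re := by
      rw [hw]
      have : ((2*c : ℝ) : ℂ) * (a₀ * (starRingEnd ℂ) t) * Complex.exp (Complex.I * x)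
          = ((2*c : ℝ) : ℂ) * ((a₀ * Complex.exp (Complex.I * x)) * (starRingEnd ℂ) t) := by
        ring
      rw [this, Complex.re_ofReal_mul]
    rw [hwre]
    ring
  have hwabs : ‖w‖ ^ 2 / 4 ≤ c^2 * ‖a₀‖^2 * ‖t‖^2 := by
    rw [hw]
    rw [norm_mul, norm_mul, Complex.norm_real, Real.norm_eq_abs, abs_of_nonneg (by positivity : (0:ℝ) ≤ 2*c),
      RCLike.norm_conj]
    rw [mul_pow, mul_pow]
    ring_nf
    nlinarith [norm_nonneg a₀, norm_nonneg t, sq_nonneg c]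
  -- convert lintegral to integral
  have hgc : Continuous fun x : ℝ => Real.exp (c * ‖a₀ * Complex.exp (Complex.I * x) + t‖ ^ 2) := by
    fun_prop
  have hgint : MeasureTheory.IntegrableOn
      (fun x : ℝ => Real.exp (c * ‖a₀ * Complex.exp (Complex.I * x) + t‖ ^ 2))
      (Set.Icc 0 (2*π)) := hgc.integrableOn_Icc
  rw [← MeasureTheory.ofReal_integral_eq_lintegral_ofReal hgint
    (Filter.Eventually.of_forall fun x => (Real.exp_pos _).le)]
  apply ENNReal.ofReal_le_ofReal
  have hle : (∫ x in Set.Icc (0:ℝ) (2*π), Real.exp (c * ‖a₀ * Complex.exp (Complex.I * x) + t‖ ^ 2))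
      = K * ∫ x in (0:ℝ)..(2*π), Real.exp ((w * Complex.exp (Complex.I * x)).re) := by
    rw [MeasureTheory.integral_Icc_eq_integral_Ioc, ← intervalIntegral.integral_of_le h2pi]
    rw [← intervalIntegral.integral_const_mul]
    congr 1
    funext x
    rw [hsplit x, Real.exp_add, hK]
  rw [hle]
  calc K * ∫ x in (0:ℝ)..(2*π), Real.exp ((w * Complex.exp (Complex.I * x)).re)
      ≤ K * (2 * π * Real.exp ((‖w‖) ^ 2 / 4)) := by
        apply mul_le_mul_of_nonneg_left (integral_exp_re_le w) (Real.exp_nonneg _)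
    _ = 2*π * Real.exp ((c * ‖a₀‖^2 + c*‖t‖^2) + (‖w‖)^2/4) := by
        have hx : Real.exp ((c * ‖a₀‖^2 + c*‖t‖^2) + (‖w‖)^2/4)
            = K * Real.exp ((‖w‖)^2/4) := by rw [hK, ← Real.exp_add]
        rw [hx]; ring
    _ ≤ 2*π * (Real.exp (c * ‖a₀‖^2) * Real.exp ((c * (1 + c * ‖a₀‖^2)) * ‖t‖^2)) := by
        rw [← Real.exp_add]
        apply mul_le_mul_of_nonneg_left _ h2pi
        apply Real.exp_le_exp.mpr
        have habs2 : (‖w‖) = ‖w‖ := rfl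
        rw [habs2]
        nlinarith [hwabs]

noncomputable def nu : Measure ℝ := volume.restrict (Set.Icc (0:ℝ) (2*π))

instance : IsFiniteMeasure nu :=
  ⟨by rw [nu, Measure.restrict_apply_univ]; exact measure_Icc_lt_top⟩

lemma key_lemma : ∀ (n : ℕ) (c : ℝ) (a : Fin n → ℂ), 0 < c →
    c * (∑ j, ‖a j‖^2) < 1 →
    (∫⁻ θ : Fin n → ℝ,
        ENNReal.ofReal (Real.exp (c * ‖∑ j, a j * Complex.exp (Complex.I * (θ j : ℂ))‖^2))
        ∂(Measure.pi fun _ : Fin n => nu))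
      ≤ ENNReal.ofReal ((2*π)^n * (1 - c * ∑ j, ‖a j‖^2)⁻¹) := by
  intro n
  induction n with
  | zero =>
    intro c a hc h
    simp [MeasureTheory.lintegral_const, MeasureTheory.Measure.pi_univ]
  | succ n ih =>
    intro c a hc h
    have h2pi : (0:ℝ) < 2*π := by positivity
    set A : ℝ := ‖a 0‖^2 with hA
    set S : ℝ := ∑ j : Fin n, ‖a (Fin.succ j)‖^2 with hS
    have hsum_split : (∑ j : Fin (n+1), ‖a j‖^2) = A + S := Fin.sum_univ_succ _
    have hA0 : 0 ≤ A := by positivity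
    have hS0 : 0 ≤ S := Finset.sum_nonneg fun j _ => by positivity
    have hAS : c * (A + S) < 1 := by rw [← hsum_split]; exact h
    have hcS : c * S < 1 := by nlinarith
    have hcA : c * A < 1 := by nlinarith
    set c' : ℝ := c * (1 + c * A) with hc'
    have hc'0 : 0 < c' := by nlinarith [mul_nonneg hc.le hA0]
    have hc'S : c' * S < 1 := by nlinarith [mul_nonneg hc.le hS0, mul_nonneg hc.le hA0]
    -- step 1: pass to the product measure
    set F : (Fin (n+1) → ℝ) → ℝ≥0∞ := fun θ =>
      ENNReal.ofReal (Real.exp (c * ‖∑ j, a j * Complex.exp (Complex.I * (θ j : ℂ))‖^2)) with hF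
    set G : ℝ × (Fin n → ℝ) → ℝ≥0∞ := fun p =>
      ENNReal.ofReal (Real.exp (c * ‖a 0 * Complex.exp (Complex.I * (p.1 : ℂ)) +
        ∑ j : Fin n, a (Fin.succ j) * Complex.exp (Complex.I * (p.2 j : ℂ))‖^2)) with hG
    have hmp := measurePreserving_piFinSuccAbove (fun _ : Fin (n+1) => nu) 0
    set e := MeasurableEquiv.piFinSuccAbove (fun _ : Fin (n+1) => ℝ) 0 with he
    have hFG : ∀ θ : Fin (n+1) → ℝ, F θ = G (e θ) := by
      intro θ
      have he1 : e θ = (θ 0, fun j : Fin n => θ j.succ) := by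
        rw [he]
        simp [MeasurableEquiv.piFinSuccAbove, Fin.removeNth, Fin.zero_succAbove]
        rfl
      simp only [hF, hG, he1]
      rw [Fin.sum_univ_succ]
    have h1 : (∫⁻ θ, F θ ∂(Measure.pi fun _ : Fin (n+1) => nu))
        = ∫⁻ p, G p ∂(nu.prod (Measure.pi fun _ : Fin n => nu)) := by
      rw [← hmp.map_eq, lintegral_map_equiv]
      exact lintegral_congr hFG
    have hGmeas : Measurable G := by
      rw [hG]
      apply Measurable.ennreal_ofReal
      fun_prop
    have h2 : (∫⁻ p, G p ∂(nu.prod (Measure.pi fun _ : Fin n => nu)))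
        = ∫⁻ y, (∫⁻ x, G (x, y) ∂nu) ∂(Measure.pi fun _ : Fin n => nu) :=
      MeasureTheory.lintegral_prod_symm G hGmeas.aemeasurable
    -- step 2: inner bound
    have hinner : ∀ y : Fin n → ℝ,
        (∫⁻ x, G (x, y) ∂nu) ≤ ENNReal.ofReal (2*π * Real.exp (c*A)) *
          ENNReal.ofReal (Real.exp (c' *
            ‖∑ j : Fin n, a (Fin.succ j) * Complex.exp (Complex.I * (y j : ℂ))‖^2)) := by
      intro y
      set t : ℂ := ∑ j : Fin n, a (Fin.succ j) * Complex.exp (Complex.I * (y j : ℂ)) with ht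
      have := inner_bound c hc.le (a 0) t
      rw [← ENNReal.ofReal_mul (by positivity)]
      calc (∫⁻ x, G (x, y) ∂nu)
          = ∫⁻ x in Set.Icc (0:ℝ) (2*π), ENNReal.ofReal
              (Real.exp (c * ‖a 0 * Complex.exp (Complex.I * (x : ℂ)) + t‖^2)) := rfl
        _ ≤ ENNReal.ofReal ((2*π) * (Real.exp (c * ‖a 0‖^2) *
              Real.exp ((c * (1 + c * ‖a 0‖^2)) * ‖t‖^2))) := this
        _ = ENNReal.ofReal (2*π * Real.exp (c*A) * Real.exp (c' * ‖t‖^2)) := by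
            rw [hc', hA]; ring_nf
    -- assemble
    rw [h1, h2]
    calc (∫⁻ y, (∫⁻ x, G (x, y) ∂nu) ∂(Measure.pi fun _ : Fin n => nu))
        ≤ ∫⁻ y, (ENNReal.ofReal (2*π * Real.exp (c*A)) * ENNReal.ofReal (Real.exp (c' *
              ‖∑ j : Fin n, a (Fin.succ j) * Complex.exp (Complex.I * (y j : ℂ))‖^2)))
            ∂(Measure.pi fun _ : Fin n => nu) :=
          lintegral_mono hinner
      _ = ENNReal.ofReal (2*π * Real.exp (c*A)) * ∫⁻ y,
            ENNReal.ofReal (Real.exp (c' *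
              ‖∑ j : Fin n, a (Fin.succ j) * Complex.exp (Complex.I * (y j : ℂ))‖^2))
            ∂(Measure.pi fun _ : Fin n => nu) :=
          lintegral_const_mul' _ _ ENNReal.ofReal_ne_top
      _ ≤ ENNReal.ofReal (2*π * Real.exp (c*A)) *
            ENNReal.ofReal ((2*π)^n * (1 - c' * S)⁻¹) := by
          apply mul_le_mul_right (ih c' (fun j => a (Fin.succ j)) hc'0 hc'S)
      _ ≤ ENNReal.ofReal ((2*π)^(n+1) * (1 - c * ∑ j : Fin (n+1), ‖a j‖^2)⁻¹) := by
          rw [← ENNReal.ofReal_mul (by positivity)]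
          apply ENNReal.ofReal_le_ofReal
          rw [hsum_split]
          have hX : 0 < 1 - c' * S := by linarith
          have hY : 0 < 1 - c * (A + S) := by linarith
          have hE1 : (1 - c*A) * Real.exp (c*A) ≤ 1 := by
            have h1 := Real.add_one_le_exp (-(c*A))
            rw [Real.exp_neg] at h1
            have h2 := Real.exp_pos (c*A)
            have := mul_le_mul_of_nonneg_right h1 h2.le
            rw [inv_mul_cancel₀ h2.ne'] at this
            linarith [this]
          have hE2 : 1 + c*A ≤ Real.exp (c*A) := by
            linarith [Real.add_one_le_exp (c*A)]
          have hmain : Real.exp (c*A) * (1 - c * (A + S)) ≤ 1 - c' * S := by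
            have hcS0 : 0 ≤ c * S := mul_nonneg hc.le hS0
            nlinarith [Real.exp_pos (c*A), mul_nonneg hcS0 (by linarith : (0:ℝ) ≤ Real.exp (c*A) - 1 - c*A)]
          have hdiv : Real.exp (c*A) / (1 - c' * S) ≤ 1 / (1 - c * (A + S)) := by
            rw [div_le_div_iff₀ hX hY]
            linarith [hmain]
          calc 2*π * Real.exp (c*A) * ((2*π)^n * (1 - c' * S)⁻¹)
              = (2*π)^(n+1) * (Real.exp (c*A) / (1 - c' * S)) := by
                rw [pow_succ, div_eq_mul_inv]; ring
            _ ≤ (2*π)^(n+1) * (1 / (1 - c * (A + S))) := by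
                apply mul_le_mul_of_nonneg_left hdiv (by positivity)
            _ = (2*π)^(n+1) * (1 - c * (A + S))⁻¹ := by rw [one_div]

lemma restrict_pi_Icc (n : ℕ) :
    (volume : Measure (Fin n → ℝ)).restrict (Set.univ.pi fun _ : Fin n => Set.Icc (0:ℝ) (2*π))
      = Measure.pi (fun _ : Fin n => nu) := by
  refine (Measure.pi_eq (μ := fun _ : Fin n => nu) fun s hs => ?_).symm
  rw [Measure.restrict_apply (MeasurableSet.univ_pi hs)]
  rw [← Set.pi_inter_distrib]
  rw [volume_pi, Measure.pi_pi]
  congr 1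
  funext i
  rw [nu, Measure.restrict_apply (hs i)]

/-- Jessen's inequality: if `d = 1 - 2λ Σ_j |a_j|² > 0`, then for every `n` the exponential
moment `(2π)^{-n} ∫_{[0,2π]^n} exp(2λ|Σ_{j<n} a_j e^{iθ_j}|²) dθ` is at most
`(1 - 2λ Σ_{j<n} |a_j|²)⁻¹ ≤ d⁻¹`. -/
theorem jessen_inequality (lam : ℝ) (hlam : 0 < lam) (a : ℕ → ℂ)
    (hsum : Summable fun j => ‖a j‖ ^ 2)
    (hd : 0 < 1 - 2 * lam * ∑' j : ℕ, ‖a j‖ ^ 2) (n : ℕ) :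
    (∫ θ in Set.univ.pi fun _ : Fin n => Set.Icc (0 : ℝ) (2 * Real.pi),
        Real.exp (2 * lam *
          ‖∑ j : Fin n, a (j : ℕ) * Complex.exp (Complex.I * ((θ j : ℝ) : ℂ))‖ ^ 2))
      ≤ (2 * Real.pi) ^ n * (1 - 2 * lam * ∑ j : Fin n, ‖a (j : ℕ)‖ ^ 2)⁻¹ ∧
    (1 - 2 * lam * ∑ j : Fin n, ‖a (j : ℕ)‖ ^ 2)⁻¹
      ≤ (1 - 2 * lam * ∑' j : ℕ, ‖a j‖ ^ 2)⁻¹ := by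
  have hpart : (∑ j : Fin n, ‖a (j : ℕ)‖ ^ 2) ≤ ∑' j : ℕ, ‖a j‖ ^ 2 := by
    rw [Fin.sum_univ_eq_sum_range (fun j => ‖a j‖^2) n]
    exact Summable.sum_le_tsum (Finset.range n) (fun i _ => by positivity) hsum
  have hlt : 2 * lam * (∑ j : Fin n, ‖a (j : ℕ)‖ ^ 2) < 1 := by
    have : 2 * lam * (∑ j : Fin n, ‖a (j : ℕ)‖ ^ 2) ≤ 2 * lam * ∑' j : ℕ, ‖a j‖ ^ 2 :=
      mul_le_mul_of_nonneg_left hpart (by positivity)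
    linarith
  have hpos : 0 < 1 - 2 * lam * ∑ j : Fin n, ‖a (j : ℕ)‖ ^ 2 := by linarith
  constructor
  · -- main bound
    have hkey := key_lemma n (2 * lam) (fun j : Fin n => a (j : ℕ)) (by positivity) hlt
    have hmeas : AEStronglyMeasurable
        (fun θ : Fin n → ℝ => Real.exp (2 * lam *
          ‖∑ j : Fin n, a (j : ℕ) * Complex.exp (Complex.I * ((θ j : ℝ) : ℂ))‖ ^ 2))
        ((volume : Measure (Fin n → ℝ)).restrict
          (Set.univ.pi fun _ : Fin n => Set.Icc (0 : ℝ) (2 * π))) := by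
      apply Continuous.aestronglyMeasurable
      fun_prop
    rw [MeasureTheory.integral_eq_lintegral_of_nonneg_ae
      (Filter.Eventually.of_forall fun θ => (Real.exp_pos _).le) hmeas]
    rw [restrict_pi_Icc n]
    apply ENNReal.toReal_le_of_le_ofReal (by positivity)
    exact hkey
  · have hmono : 1 - 2 * lam * ∑' j : ℕ, ‖a j‖ ^ 2
        ≤ 1 - 2 * lam * ∑ j : Fin n, ‖a (j : ℕ)‖ ^ 2 := by
      have := mul_le_mul_of_nonneg_left hpart (by positivity : (0:ℝ) ≤ 2 * lam)
      linarith
    exact inv_anti₀ hd hmono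
end
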